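/- Let f be a transcendental entire function, let R > 0 be such that M(r, f) > r for all r ≥ R, and suppose that A_R(f) is a spider's web. Let K be a connected component of the complement of A(f). Then every open neighbourhood of K contains a closed subset of A(f) that surrounds K. -/

import Mathlib

/-!
Fix `z ∈ K` and let `U_m` be the component of `(A_R^{-m}(f))ᶜ` containing `z`; its frontier
is a closed subset of `A(f)` surrounding `K`. A loop `∂G` of the spider's web around `0` and `z`
encloses every `U_m`, so the compact sets `closure U_m` decrease to a continuum containing `z`.
This continuum misses `A(f)`: if `G` lies in the disc of radius `M^c(R)` and `p ∈ A_R^{-j}(f)`,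
then, as `z ∉ A(f)`, some `|f^t(z)|` with `t = n + j + c + 1` is below `M^n(R)`, so `f^t(U_t)`
stays inside the bounded image `f^n(G)` (whose frontier lies in `A_R^n(f)`), giving
`|f^t(p)| ≤ M^{n+c}(R) < M^{n+c+1}(R) ≤ |f^t(p)|`. Hence the continuum lies in `K ⊆ V`, and by
compactness so does some `closure U_m`.
-/

open Set Metric Topology Function Bornology

/-- The maximum modulus `M(r, f)` of `f` on the circle `|z| = r`. -/
noncomputable def maxMod (f : ℂ → ℂ) (r : ℝ) : ℝ :=
  sSup ((fun z => ‖f z‖) '' Metric.sphere (0 : ℂ) r)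

/-- `f` is a transcendental entire function: holomorphic on all of `ℂ` and not a polynomial. -/
def TranscEntire (f : ℂ → ℂ) : Prop :=
  Differentiable ℂ f ∧ ¬ ∃ p : Polynomial ℂ, ∀ z, f z = p.eval z

/-- The fast escaping set `A(f)` (with parameter `R`). -/
def fastEscaping (f : ℂ → ℂ) (R : ℝ) : Set ℂ :=
  {z | ∃ L : ℕ, ∀ n : ℕ, (maxMod f)^[n] R ≤ ‖f^[n + L] z‖}

/-- The `L`-th level `A_R^L(f)` of the fast escaping set. -/
def levelSet (f : ℂ → ℂ) (R : ℝ) (L : ℤ) : Set ℂ :=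
  {z | ∀ n : ℕ, 0 ≤ (n : ℤ) + L →
    (maxMod f)^[((n : ℤ) + L).toNat] R ≤ ‖f^[n] z‖}

/-- `E ⊆ ℂ` is an (infinite) spider's web. -/
def SpidersWeb (E : Set ℂ) : Prop :=
  IsConnected E ∧ ∃ G : ℕ → Set ℂ,
    (∀ n, IsOpen (G n) ∧ IsConnected (G n) ∧ Bornology.IsBounded (G n) ∧
      SimplyConnectedSpace (G n) ∧ G n ⊆ G (n + 1) ∧ frontier (G n) ⊆ E) ∧
    (⋃ n, G n) = Set.univ

/-- `K` is a connected component of the set `S`. -/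
def IsCompOf {X : Type*} [TopologicalSpace X] (K S : Set X) : Prop :=
  ∃ z ∈ S, K = connectedComponentIn S z

/-- The `n`-th fundamental hole for `A_R(f)`: the component of the complement of
`A_R^n(f)` containing `0`. -/
noncomputable def fundHole (f : ℂ → ℂ) (R : ℝ) (n : ℤ) : Set ℂ :=
  connectedComponentIn (levelSet f R n)ᶜ 0

/-- The `n`-th fundamental loop for `A_R(f)`. -/
noncomputable def fundLoop (f : ℂ → ℂ) (R : ℝ) (n : ℤ) : Set ℂ :=
  frontier (fundHole f R n)

section Topology

variable {X : Type*} [TopologicalSpace X]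

theorem IsPreconnected.subset_of_disjoint_frontier {S T : Set X} (hS : IsPreconnected S)
    (hST : (S ∩ T).Nonempty) (hd : Disjoint S (frontier T)) : S ⊆ T := by
  have hcover : S ⊆ interior T ∪ (closure T)ᶜ := fun x hx => by
    by_cases hxT : x ∈ closure T
    · exact Or.inl (not_not.1 fun h => disjoint_left.1 hd hx ⟨hxT, h⟩)
    · exact Or.inr hxT
  obtain ⟨x, hxS, hxT⟩ := hST
  have hxi : x ∈ S ∩ interior T :=
    ⟨hxS, (hcover hxS).resolve_right (· (subset_closure hxT))⟩
  exact (hS.subset_left_of_subset_union isOpen_interior isClosed_closure.isOpen_compl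
    (disjoint_compl_right.mono_left interior_subset_closure) hcover ⟨x, hxi⟩).trans
    interior_subset

theorem frontier_connectedComponentIn_compl_subset [LocallyConnectedSpace X] {S : Set X}
    (hS : IsClosed S) (z : X) :
    frontier (connectedComponentIn Sᶜ z) ⊆ S := by
  intro x hx
  by_contra hxS
  have hopen : ∀ y, IsOpen (connectedComponentIn Sᶜ y) :=
    fun y => hS.isOpen_compl.connectedComponentIn
  obtain ⟨y, hyx, hyz⟩ := mem_closure_iff.1 hx.1 _ (hopen x) (mem_connectedComponentIn hxS)
  have hxz : x ∈ connectedComponentIn Sᶜ z := by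
    rw [connectedComponentIn_eq hyz, ← connectedComponentIn_eq hyx]
    exact mem_connectedComponentIn hxS
  exact hx.2 ((hopen z).interior_eq.symm ▸ hxz)

theorem isCompOf_compl_frontier {U : Set X} (hU : IsOpen U) (hUc : IsPreconnected U)
    {z : X} (hz : z ∈ U) : IsCompOf U (frontier U)ᶜ := by
  have hUf : Disjoint U (frontier U) := disjoint_iff_inter_eq_empty.2 hU.inter_frontier_eq
  refine ⟨z, disjoint_left.1 hUf hz, ?_⟩
  refine (isPreconnected_connectedComponentIn.subset_of_disjoint_frontier
    ⟨z, mem_connectedComponentIn (disjoint_left.1 hUf hz), hz⟩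
    (disjoint_compl_left.mono_left (connectedComponentIn_subset _ _))).antisymm' ?_
  exact hUc.subset_connectedComponentIn hz (disjoint_left.1 hUf)

theorem frontier_image_subset_image_frontier {Y : Type*} [TopologicalSpace Y] [T2Space Y]
    {g : X → Y} (hg : Continuous g) (hgo : IsOpenMap g) {G : Set X} (hG : IsOpen G)
    (hGc : IsCompact (closure G)) : frontier (g '' G) ⊆ g '' frontier G := by
  intro y hy
  have hcl : closure (g '' G) ⊆ g '' closure G :=
    closure_minimal (image_mono subset_closure) (hGc.image hg).isClosed
  obtain ⟨x, hx, rfl⟩ := hcl hy.1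
  refine ⟨x, ⟨hx, fun hxi => hy.2 ?_⟩, rfl⟩
  rw [(hgo G hG).interior_eq]
  exact mem_image_of_mem g (hG.interior_eq ▸ hxi)

theorem IsPreconnected.iInter_of_directed_isCompact [T2Space X] {ι : Type*} [Nonempty ι]
    {K : ι → Set X} (hK : Directed (· ⊇ ·) K) (hcpt : ∀ i, IsCompact (K i))
    (hconn : ∀ i, IsPreconnected (K i)) : IsPreconnected (⋂ i, K i) := by
  obtain ⟨i₀⟩ := ‹Nonempty ι›
  have hC : IsCompact (⋂ i, K i) :=
    (hcpt i₀).of_isClosed_subset (isClosed_iInter fun i => (hcpt i).isClosed)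
      (iInter_subset _ i₀)
  rw [isPreconnected_iff_subset_of_disjoint_closed]
  intro u v hu hv hCuv hCuv'
  have hdisj : Disjoint ((⋂ i, K i) ∩ u) ((⋂ i, K i) ∩ v) := by
    rw [disjoint_iff_inter_eq_empty, inter_inter_inter_comm, inter_self, hCuv']
  obtain ⟨u', v', hu', hv', hAu', hBv', huv'⟩ :=
    SeparatedNhds.of_isCompact_isCompact (hC.inter_right hu) (hC.inter_right hv) hdisj
  obtain ⟨i, hi⟩ := exists_subset_nhds_of_isCompact hK hcpt (U := u' ∪ v') fun x hx =>
    (hu'.union hv').mem_nhds ((hCuv hx).imp (fun h => hAu' ⟨hx, h⟩) fun h => hBv' ⟨hx, h⟩)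
  have hCi : (⋂ i, K i) ⊆ K i := iInter_subset _ i
  rcases isPreconnected_iff_subset_of_disjoint.1 (hconn i) u' v' hu' hv' hi
    (by rw [huv'.inter_eq, inter_empty]) with h | h
  · exact Or.inl fun x hx => (hCuv hx).resolve_right fun hxv =>
      disjoint_left.1 huv' (h (hCi hx)) (hBv' ⟨hx, hxv⟩)
  · exact Or.inr fun x hx => (hCuv hx).resolve_left fun hxu =>
      disjoint_left.1 huv' (hAu' ⟨hx, hxu⟩) (h (hCi hx))

end Topology

section MaxModulus

variable {f : ℂ → ℂ}

theorem norm_le_maxMod_of_norm_eq (hf : Continuous f) {w : ℂ} {r : ℝ} (hw : ‖w‖ = r) :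
    ‖f w‖ ≤ maxMod f r :=
  le_csSup ((isCompact_sphere 0 r).image (continuous_norm.comp hf)).bddAbove
    ⟨w, by simpa using hw, rfl⟩

theorem norm_le_maxMod (hf : Differentiable ℂ f) {w : ℂ} {r : ℝ} (hw : ‖w‖ ≤ r) :
    ‖f w‖ ≤ maxMod f r := by
  rcases hw.eq_or_lt with hw | hw
  · exact norm_le_maxMod_of_norm_eq hf.continuous hw
  have hr : r ≠ 0 := ((norm_nonneg w).trans_lt hw).ne'
  refine Complex.norm_le_of_forall_mem_frontier_norm_le isBounded_ball hf.diffContOnCl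
    (fun x hx => norm_le_maxMod_of_norm_eq hf.continuous ?_)
    (subset_closure (mem_ball_zero_iff.2 hw))
  simpa [frontier_ball (0 : ℂ) hr] using hx

theorem maxMod_le {r C : ℝ} (hr : 0 ≤ r) (h : ∀ w : ℂ, ‖w‖ = r → ‖f w‖ ≤ C) :
    maxMod f r ≤ C := by
  refine csSup_le ((NormedSpace.sphere_nonempty.2 hr).image _) ?_
  rintro _ ⟨w, hw, rfl⟩
  exact h w (by simpa using hw)

theorem maxMod_mono (hf : Differentiable ℂ f) {a b : ℝ} (ha : 0 ≤ a) (hab : a ≤ b) :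
    maxMod f a ≤ maxMod f b :=
  maxMod_le ha fun _ hw => norm_le_maxMod hf (hw.trans_le hab)

theorem maxMod_nonneg (hf : Differentiable ℂ f) {r : ℝ} (hr : 0 ≤ r) : 0 ≤ maxMod f r := by
  obtain ⟨w, hw⟩ := NormedSpace.sphere_nonempty (E := ℂ) (x := 0) |>.2 hr
  exact (norm_nonneg _).trans (norm_le_maxMod hf (by simpa using hw.le))

theorem maxMod_iterate_mono (hf : Differentiable ℂ f) {a b : ℝ} (ha : 0 ≤ a) (hab : a ≤ b)
    (n : ℕ) : (maxMod f)^[n] a ≤ (maxMod f)^[n] b := by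
  induction n generalizing a b with
  | zero => exact hab
  | succ n ih => exact ih (maxMod_nonneg hf ha) (maxMod_mono hf ha hab)

theorem norm_iterate_le_maxMod_iterate (hf : Differentiable ℂ f) (w : ℂ) (n : ℕ) :
    ‖f^[n] w‖ ≤ (maxMod f)^[n] ‖w‖ := by
  induction n with
  | zero => rfl
  | succ n ih =>
    rw [iterate_succ_apply', iterate_succ_apply']
    exact (norm_le_maxMod hf le_rfl).trans (maxMod_mono hf (norm_nonneg _) ih)

variable {R : ℝ} (hM : ∀ r ≥ R, r < maxMod f r)
include hM

theorem le_maxMod_iterate (k : ℕ) : R ≤ (maxMod f)^[k] R := by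
  induction k with
  | zero => rfl
  | succ k ih => exact ih.trans (iterate_succ_apply' (maxMod f) k R ▸ (hM _ ih).le)

theorem strictMono_maxMod_iterate : StrictMono fun k => (maxMod f)^[k] R :=
  strictMono_nat_of_lt_succ fun k =>
    (iterate_succ_apply' (maxMod f) k R).symm ▸ hM _ (le_maxMod_iterate hM k)

theorem tendsto_maxMod_iterate_atTop (hf : Differentiable ℂ f) (hR : 0 < R) :
    Filter.Tendsto (fun k => (maxMod f)^[k] R) Filter.atTop Filter.atTop := by
  refine Filter.tendsto_atTop_atTop_of_monotone' (strictMono_maxMod_iterate hM).monotone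
    fun hbdd => ?_
  -- a bounded orbit would converge to some `s ≥ R` with `M(s) ≤ s`
  set s := ⨆ k, (maxMod f)^[k] R
  have hRs : R ≤ s := le_ciSup_of_le hbdd 0 le_rfl
  have hball : ball (0 : ℂ) s ⊆ {u | ‖f u‖ ≤ s} := fun u hu => by
    obtain ⟨k, hk⟩ := exists_lt_of_lt_ciSup (mem_ball_zero_iff.1 hu)
    calc ‖f u‖ ≤ maxMod f ((maxMod f)^[k] R) := norm_le_maxMod hf hk.le
      _ = (maxMod f)^[k + 1] R := (iterate_succ_apply' _ _ _).symm
      _ ≤ s := le_ciSup hbdd (k + 1)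
  have hclosed : IsClosed {u : ℂ | ‖f u‖ ≤ s} :=
    isClosed_le (continuous_norm.comp hf.continuous) continuous_const
  have hMs : maxMod f s ≤ s := maxMod_le (hR.le.trans hRs) fun w hw =>
    closure_minimal hball hclosed <| by
      rw [closure_ball 0 (hR.trans_le hRs).ne']
      simpa using hw.le
  exact (hM s hRs).not_ge hMs

end MaxModulus

section LevelSets

variable {f : ℂ → ℂ} {R : ℝ}

theorem mem_levelSet_natCast_iff {n : ℕ} {x : ℂ} :
    x ∈ levelSet f R n ↔ ∀ k : ℕ, (maxMod f)^[k + n] R ≤ ‖f^[k] x‖ := by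
  have htoNat : ∀ k : ℕ, ((k : ℤ) + n).toNat = k + n := fun k => by omega
  simp only [levelSet, mem_ofPred_eq, htoNat]
  exact ⟨fun h k => h k (by positivity), fun h k _ => h k⟩

theorem mem_levelSet_neg_iff {m : ℕ} {x : ℂ} :
    x ∈ levelSet f R (-m) ↔ ∀ k : ℕ, (maxMod f)^[k] R ≤ ‖f^[k + m] x‖ := by
  refine ⟨fun h k => ?_, fun h n hn => ?_⟩
  · simpa using h (k + m) (by omega)
  · obtain ⟨k, rfl⟩ : ∃ k, n = k + m := ⟨n - m, by omega⟩
    simpa using h k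

theorem fastEscaping_eq_iUnion_levelSet :
    fastEscaping f R = ⋃ m : ℕ, levelSet f R (-m) := by
  ext x
  simp [fastEscaping, mem_levelSet_neg_iff]

theorem levelSet_neg_subset_fastEscaping (m : ℕ) : levelSet f R (-m) ⊆ fastEscaping f R :=
  fastEscaping_eq_iUnion_levelSet ▸ subset_iUnion_of_subset m le_rfl

theorem isClosed_levelSet (hf : Continuous f) (L : ℤ) : IsClosed (levelSet f R L) :=
  by
  simp only [levelSet, ofPred_forall]
  exact isClosed_iInter fun n => isClosed_iInter fun _ =>
    isClosed_le continuous_const (continuous_norm.comp (hf.iterate n))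

theorem norm_ge_of_mem_levelSet_natCast {n : ℕ} {x : ℂ} (hx : x ∈ levelSet f R n) :
    (maxMod f)^[n] R ≤ ‖x‖ := by
  simpa using mem_levelSet_natCast_iff.1 hx 0

theorem iterate_mem_levelSet_natCast {w : ℂ} (hw : w ∈ levelSet f R 0) (n : ℕ) :
    f^[n] w ∈ levelSet f R n := by
  rw [mem_levelSet_natCast_iff]
  intro k
  rw [← iterate_add_apply]
  exact mem_levelSet_natCast_iff.1 (Nat.cast_zero (R := ℤ) ▸ hw) (k + n)

variable (hM : ∀ r ≥ R, r < maxMod f r)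
include hM

theorem levelSet_neg_mono {m m' : ℕ} (h : m ≤ m') :
    levelSet f R (-m) ⊆ levelSet f R (-m') := by
  intro x hx
  rw [mem_levelSet_neg_iff] at hx ⊢
  intro k
  obtain ⟨d, rfl⟩ := Nat.exists_eq_add_of_le h
  calc (maxMod f)^[k] R ≤ (maxMod f)^[k + d] R :=
        (strictMono_maxMod_iterate hM).monotone (Nat.le_add_right k d)
    _ ≤ ‖f^[k + (m + d)] x‖ := by simpa [add_right_comm, add_assoc] using hx (k + d)

theorem levelSet_zero_subset_neg (m : ℕ) : levelSet f R 0 ⊆ levelSet f R (-m) := by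
  simpa using levelSet_neg_mono hM (Nat.zero_le m)

theorem mem_levelSet_neg_of_iterate_mem {t n : ℕ} {x : ℂ} (h : f^[t] x ∈ levelSet f R n) :
    x ∈ levelSet f R (-t) := by
  rw [mem_levelSet_neg_iff]
  intro k
  calc (maxMod f)^[k] R ≤ (maxMod f)^[k + n] R :=
        (strictMono_maxMod_iterate hM).monotone (Nat.le_add_right k n)
    _ ≤ ‖f^[k + t] x‖ := by simpa [iterate_add_apply] using mem_levelSet_natCast_iff.1 h k

theorem image_iterate_connectedComponentIn_subset (hf : Continuous f) {t : ℕ} (n : ℕ) {z : ℂ}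
    (hz : z ∉ levelSet f R (-t)) :
    f^[t] '' connectedComponentIn (levelSet f R (-t))ᶜ z ⊆
      connectedComponentIn (levelSet f R n)ᶜ (f^[t] z) := by
  refine (isPreconnected_connectedComponentIn.image _ (hf.iterate t).continuousOn)
    |>.subset_connectedComponentIn ⟨z, mem_connectedComponentIn hz, rfl⟩ ?_
  rintro _ ⟨u, hu, rfl⟩ hmem
  exact connectedComponentIn_subset _ _ hu (mem_levelSet_neg_of_iterate_mem hM hmem)

end LevelSets

theorem TranscEntire.isOpenMap_iterate {f : ℂ → ℂ} (hf : TranscEntire f) (n : ℕ) :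
    IsOpenMap f^[n] := by
  have hopen : IsOpenMap f := (hf.1.differentiableOn.analyticOnNhd isOpen_univ)
    |>.is_constant_or_isOpenMap |>.resolve_left fun ⟨c, hc⟩ =>
      hf.2 ⟨Polynomial.C c, fun z => by simpa using hc z⟩
  induction n with
  | zero => exact IsOpenMap.id
  | succ n ih => exact ih.comp hopen

theorem SpidersWeb.exists_isOpen_isBounded_superset {E s : Set ℂ} (hE : SpidersWeb E)
    (hs : IsCompact s) : ∃ G, IsOpen G ∧ IsBounded G ∧ s ⊆ G ∧ frontier G ⊆ E := by
  obtain ⟨-, G, hG, hGuniv⟩ := hE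
  obtain ⟨N, hN⟩ := hs.elim_directed_cover G (fun n => (hG n).1) (hGuniv ▸ subset_univ s)
    (monotone_nat_of_le_succ fun n => (hG n).2.2.2.2.1).directed_le
  exact ⟨G N, (hG N).1, (hG N).2.2.1, hN, (hG N).2.2.2.2.2⟩

section Dynamics

variable {f : ℂ → ℂ} {R : ℝ} (hf : TranscEntire f) (hR : 0 < R)
  (hM : ∀ r ≥ R, r < maxMod f r) {G : Set ℂ} (hGo : IsOpen G) (hGb : IsBounded G)
  (hGf : frontier G ⊆ levelSet f R 0)

include hM hGf in
theorem connectedComponentIn_compl_levelSet_neg_subset {z : ℂ} (hzG : z ∈ G) {m : ℕ}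
    (hz : z ∉ levelSet f R (-m)) : connectedComponentIn (levelSet f R (-m))ᶜ z ⊆ G :=
  isPreconnected_connectedComponentIn.subset_of_disjoint_frontier
    ⟨z, mem_connectedComponentIn hz, hzG⟩
    ((disjoint_compl_left.mono_left (connectedComponentIn_subset _ _)).mono_right
      (hGf.trans (levelSet_zero_subset_neg hM m)))

include hf hGo hGb hGf

theorem frontier_image_iterate_subset_levelSet (n : ℕ) :
    frontier (f^[n] '' G) ⊆ levelSet f R n := by
  rintro _ hx
  obtain ⟨u, hu, rfl⟩ := frontier_image_subset_image_frontier (hf.1.continuous.iterate n)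
    (hf.isOpenMap_iterate n) hGo hGb.isCompact_closure hx
  exact iterate_mem_levelSet_natCast (hGf hu) n

include hR hM

theorem ball_subset_image_iterate (hG0 : 0 ∈ G) (n : ℕ) :
    ball 0 ((maxMod f)^[n] R) ⊆ f^[n] '' G := by
  have hpos : 0 < (maxMod f)^[n] R := hR.trans_le (le_maxMod_iterate hM n)
  have h0 : f^[n] 0 ∈ closure (ball 0 ((maxMod f)^[n] R)) := by
    rw [closure_ball 0 hpos.ne', mem_closedBall_zero_iff]
    calc ‖f^[n] 0‖ ≤ (maxMod f)^[n] ‖(0 : ℂ)‖ := norm_iterate_le_maxMod_iterate hf.1 0 n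
      _ ≤ (maxMod f)^[n] R := norm_zero (E := ℂ) ▸ maxMod_iterate_mono hf.1 le_rfl hR.le n
  obtain ⟨y, hyG, hyball⟩ :=
    mem_closure_iff.1 h0 _ (hf.isOpenMap_iterate n G hGo) (mem_image_of_mem _ hG0)
  refine (convex_ball _ _).isPreconnected.subset_of_disjoint_frontier ⟨y, hyball, hyG⟩ ?_
  refine disjoint_left.2 fun x hx hxf => ?_
  exact (mem_ball_zero_iff.1 hx).not_ge <| norm_ge_of_mem_levelSet_natCast
    (frontier_image_iterate_subset_levelSet hf hGo hGb hGf n hxf)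

theorem connectedComponentIn_compl_levelSet_subset_image (hG0 : 0 ∈ G) {n : ℕ} {y : ℂ}
    (hy : ‖y‖ < (maxMod f)^[n] R) :
    connectedComponentIn (levelSet f R n)ᶜ y ⊆ f^[n] '' G := by
  have hyG := ball_subset_image_iterate hf hR hM hGo hGb hGf hG0 n (mem_ball_zero_iff.2 hy)
  have hy' : y ∉ levelSet f R n := fun h => (norm_ge_of_mem_levelSet_natCast h).not_gt hy
  exact isPreconnected_connectedComponentIn.subset_of_disjoint_frontier
    ⟨y, mem_connectedComponentIn hy', hyG⟩ <| (disjoint_compl_left.mono_left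
      (connectedComponentIn_subset _ _)).mono_right
      (frontier_image_iterate_subset_levelSet hf hGo hGb hGf n)

theorem notMem_fastEscaping_of_mem_closure_connectedComponentIn (hG0 : 0 ∈ G) {z p : ℂ}
    (hz : z ∉ fastEscaping f R)
    (hp : ∀ m : ℕ, p ∈ closure (connectedComponentIn (levelSet f R (-m))ᶜ z)) :
    p ∉ fastEscaping f R := by
  intro hpA
  obtain ⟨j, hj⟩ := mem_iUnion.1 (fastEscaping_eq_iUnion_levelSet ▸ hpA)
  obtain ⟨ρ, hρ⟩ := hGb.subset_closedBall 0
  obtain ⟨c, hc⟩ := ((tendsto_maxMod_iterate_atTop hM hf.1 hR).eventually_ge_atTop ρ).exists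
  obtain ⟨n, hn⟩ : ∃ n, ‖f^[n + (j + c + 1)] z‖ < (maxMod f)^[n] R := by
    simp only [fastEscaping, mem_ofPred_eq, not_exists, not_forall, not_le] at hz
    exact hz _
  set t := n + (j + c + 1)
  have hzt : z ∉ levelSet f R (-t) := fun h => hz (levelSet_neg_subset_fastEscaping t h)
  have hbound : f^[t] '' connectedComponentIn (levelSet f R (-t))ᶜ z ⊆
      closedBall 0 ((maxMod f)^[n + c] R) := by
    refine (image_iterate_connectedComponentIn_subset hM hf.1.continuous n hzt).trans
      ((connectedComponentIn_compl_levelSet_subset_image hf hR hM hGo hGb hGf hG0 hn).trans ?_)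
    rintro _ ⟨u, hu, rfl⟩
    rw [mem_closedBall_zero_iff, iterate_add_apply]
    exact (norm_iterate_le_maxMod_iterate hf.1 u n).trans <| maxMod_iterate_mono hf.1
      (norm_nonneg u) ((mem_closedBall_zero_iff.1 (hρ hu)).trans hc) n
  have hupper : ‖f^[t] p‖ ≤ (maxMod f)^[n + c] R :=
    mem_closedBall_zero_iff.1 <| closure_minimal (image_subset_iff.1 hbound)
      (isClosed_closedBall.preimage (hf.1.continuous.iterate t)) (hp t)
  have hlower : (maxMod f)^[n + c + 1] R ≤ ‖f^[t] p‖ := by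
    simpa [show n + c + 1 + j = t by omega] using mem_levelSet_neg_iff.1 hj (n + c + 1)
  exact (hupper.trans_lt (strictMono_maxMod_iterate hM (Nat.lt_succ_self _))).not_ge hlower

theorem exists_closure_connectedComponentIn_subset (hG0 : 0 ∈ G) {z : ℂ} (hzG : z ∈ G)
    (hz : z ∉ fastEscaping f R) {V : Set ℂ} (hV : IsOpen V)
    (hKV : connectedComponentIn (fastEscaping f R)ᶜ z ⊆ V) :
    ∃ m : ℕ, closure (connectedComponentIn (levelSet f R (-m))ᶜ z) ⊆ V := by
  set U : ℕ → Set ℂ := fun m => connectedComponentIn (levelSet f R (-m))ᶜ z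
  have hzm (m : ℕ) : z ∉ levelSet f R (-m) := fun h => hz (levelSet_neg_subset_fastEscaping m h)
  have hanti : Antitone fun m => closure (U m) := fun m m' h =>
    closure_mono (connectedComponentIn_mono z (compl_subset_compl.2 (levelSet_neg_mono hM h)))
  have hcpt (m : ℕ) : IsCompact (closure (U m)) := (hGb.subset
    (connectedComponentIn_compl_levelSet_neg_subset hM hGf hzG (hzm m))).isCompact_closure
  have hinter : ⋂ m, closure (U m) ⊆ connectedComponentIn (fastEscaping f R)ᶜ z :=
    (IsPreconnected.iInter_of_directed_isCompact hanti.directed_ge hcpt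
      fun m => isPreconnected_connectedComponentIn.closure).subset_connectedComponentIn
      (mem_iInter.2 fun m => subset_closure (mem_connectedComponentIn (hzm m))) fun p hp =>
        notMem_fastEscaping_of_mem_closure_connectedComponentIn hf hR hM hGo hGb hGf hG0 hz
          (mem_iInter.1 hp)
  exact exists_subset_nhds_of_isCompact hanti.directed_ge hcpt
    fun x hx => hV.mem_nhds (hKV (hinter hx))

end Dynamics

/-- every neighbourhood of a component `K` of `A(f)ᶜ` contains a closed
subset of `A(f)` surrounding `K`. -/
theorem stmt_9 (f : ℂ → ℂ) (R : ℝ) (hf : TranscEntire f) (hR : 0 < R)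
    (hM : ∀ r ≥ R, r < maxMod f r) (hweb : SpidersWeb (levelSet f R 0))
    (K : Set ℂ) (hK : IsCompOf K (fastEscaping f R)ᶜ) :
    ∀ V : Set ℂ, IsOpen V → K ⊆ V →
      ∃ X : Set ℂ, X ⊆ V ∧ IsClosed X ∧ X ⊆ fastEscaping f R ∧
        ∃ C : Set ℂ, IsCompOf C Xᶜ ∧ Bornology.IsBounded C ∧ K ⊆ C := by
  intro V hV hKV
  obtain ⟨z, hz, rfl⟩ := hK
  obtain ⟨G, hGo, hGb, hG0z, hGf⟩ :=
    hweb.exists_isOpen_isBounded_superset (s := {0, z}) (toFinite _).isCompact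
  have hG0 : (0 : ℂ) ∈ G := hG0z (by simp)
  have hzG : z ∈ G := hG0z (by simp)
  obtain ⟨m, hm⟩ :=
    exists_closure_connectedComponentIn_subset hf hR hM hGo hGb hGf hG0 hzG hz hV hKV
  have hzm : z ∉ levelSet f R (-m) := fun h => hz (levelSet_neg_subset_fastEscaping m h)
  have hclosed : IsClosed (levelSet f R (-m)) := isClosed_levelSet hf.1.continuous _
  refine ⟨frontier (connectedComponentIn (levelSet f R (-m))ᶜ z),
    frontier_subset_closure.trans hm, isClosed_frontier,
    (frontier_connectedComponentIn_compl_subset hclosed z).trans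
      (levelSet_neg_subset_fastEscaping m),
    _, isCompOf_compl_frontier hclosed.isOpen_compl.connectedComponentIn
      isPreconnected_connectedComponentIn (mem_connectedComponentIn hzm),
    hGb.subset (connectedComponentIn_compl_levelSet_neg_subset hM hGf hzG hzm),
    connectedComponentIn_mono z (compl_subset_compl.2 (levelSet_neg_subset_fastEscaping m))⟩
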